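/- Let P ∈ ℤ[X] be monic of degree n with at least 2 nonzero coefficients, and γ ∈ (0,1] such that the degree of P − X^n is at most (1−γ)·n. Let F, G, H ∈ ℤ[X] with deg F, deg G, deg H < n. Then the norm of Δ = H − ((F·G) mod P) satisfies ‖Δ‖ ≤ ‖H‖ + min(#F, #G)·‖F‖·‖G‖·(#P·‖P‖)^{⌈1/γ⌉}. -/

import Mathlib

/-!
Modulo a monic `P` of degree `n` we have `X ^ n ≡ -P.eraseLead`, and `e := P.eraseLead.natDegree`
is at most `(1 - γ) n`. Substituting this congruence for the part of `Q` of degree `≥ n` lowers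
the degree by `n - e ≥ γ n` and multiplies the norm by at most `1 + #P.eraseLead * ‖P‖ = #P * ‖P‖`.
Since `deg (F * G) ≤ 2 n - 2`, after `⌈1 / γ⌉` substitutions the degree is below `n`, so the result
is `(F * G) %ₘ P`.
-/

open Polynomial

/-- The norm of an integer polynomial: the maximum of the absolute values of its
coefficients (as a natural number). -/
noncomputable def polyNorm (F : Polynomial ℤ) : ℕ :=
  F.support.sup fun i => (F.coeff i).natAbs

section

variable {R : Type*} [Ring R]

theorem Polynomial.Monic.eraseLead_eq_sub_X_pow {P : R[X]} (hP : P.Monic) :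
    P.eraseLead = P - X ^ P.natDegree := by
  simpa [hP.leadingCoeff] using P.self_sub_C_mul_X_pow.symm

variable [Nontrivial R]

theorem coeff_modByMonic_X_pow (Q : R[X]) (n i : ℕ) :
    (Q %ₘ X ^ n).coeff i = if i < n then Q.coeff i else 0 := by
  split_ifs with hi
  · conv_rhs => rw [← modByMonic_add_div Q (X ^ n)]
    simp [coeff_X_pow_mul', hi]
  · refine coeff_eq_zero_of_degree_lt ((degree_modByMonic_lt Q (monic_X_pow n)).trans_le ?_)
    simpa using not_lt.mp hi

theorem coeff_divByMonic_X_pow (Q : R[X]) (n i : ℕ) :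
    (Q /ₘ X ^ n).coeff i = Q.coeff (i + n) := by
  conv_rhs => rw [← modByMonic_add_div Q (X ^ n)]
  simp [coeff_modByMonic_X_pow, coeff_X_pow_mul']

end

theorem natAbs_coeff_le_polyNorm (F : ℤ[X]) (i : ℕ) : (F.coeff i).natAbs ≤ polyNorm F := by
  by_cases h : i ∈ F.support
  · exact Finset.le_sup (f := fun i => (F.coeff i).natAbs) h
  · simp [notMem_support_iff.mp h]

theorem polyNorm_le_of_natAbs_coeff_le {F : ℤ[X]} {c : ℕ} (h : ∀ i, (F.coeff i).natAbs ≤ c) :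
    polyNorm F ≤ c :=
  Finset.sup_le fun i _ => h i

theorem Polynomial.Monic.one_le_polyNorm {P : ℤ[X]} (hP : P.Monic) : 1 ≤ polyNorm P := by
  simpa [hP.coeff_natDegree] using natAbs_coeff_le_polyNorm P P.natDegree

theorem polyNorm_sub_le (A B : ℤ[X]) : polyNorm (A - B) ≤ polyNorm A + polyNorm B :=
  polyNorm_le_of_natAbs_coeff_le fun i => by
    rw [coeff_sub]
    exact (Int.natAbs_sub_le _ _).trans
      (add_le_add (natAbs_coeff_le_polyNorm A i) (natAbs_coeff_le_polyNorm B i))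

theorem polyNorm_mul_le (A B : ℤ[X]) :
    polyNorm (A * B) ≤ A.support.card * polyNorm A * polyNorm B := by
  refine polyNorm_le_of_natAbs_coeff_le fun k => ?_
  have hterm : ∀ i ∈ A.support,
      ((C (A.coeff i) * X ^ i * B).coeff k).natAbs ≤ polyNorm A * polyNorm B := by
    intro i _
    rw [mul_assoc, coeff_C_mul, coeff_X_pow_mul', Int.natAbs_mul]
    split_ifs
    · exact Nat.mul_le_mul (natAbs_coeff_le_polyNorm A i) (natAbs_coeff_le_polyNorm B _)
    · simp
  conv_lhs => rw [A.as_sum_support_C_mul_X_pow, Finset.sum_mul, finsetSum_coeff]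
  calc _ ≤ ∑ i ∈ A.support, ((C (A.coeff i) * X ^ i * B).coeff k).natAbs := Int.natAbs_sum_le _ _
    _ ≤ A.support.card * (polyNorm A * polyNorm B) := by
        simpa using Finset.sum_le_card_nsmul _ _ _ hterm
    _ = A.support.card * polyNorm A * polyNorm B := (mul_assoc _ _ _).symm

theorem polyNorm_mul_le_min (A B : ℤ[X]) :
    polyNorm (A * B) ≤ min A.support.card B.support.card * polyNorm A * polyNorm B := by
  rcases min_cases A.support.card B.support.card with ⟨h, _⟩ | ⟨h, _⟩ <;> rw [h]
  · exact polyNorm_mul_le A B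
  · rw [mul_comm A B, mul_right_comm]
    exact polyNorm_mul_le B A

theorem polyNorm_eraseLead_le (P : ℤ[X]) : polyNorm P.eraseLead ≤ polyNorm P :=
  polyNorm_le_of_natAbs_coeff_le fun i => by
    rw [eraseLead_coeff]
    split_ifs
    · simp
    · exact natAbs_coeff_le_polyNorm P i

theorem polyNorm_modByMonic_X_pow_le (Q : ℤ[X]) (n : ℕ) : polyNorm (Q %ₘ X ^ n) ≤ polyNorm Q :=
  polyNorm_le_of_natAbs_coeff_le fun i => by
    rw [coeff_modByMonic_X_pow]
    split_ifs
    · exact natAbs_coeff_le_polyNorm Q i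
    · simp

theorem polyNorm_divByMonic_X_pow_le (Q : ℤ[X]) (n : ℕ) : polyNorm (Q /ₘ X ^ n) ≤ polyNorm Q :=
  polyNorm_le_of_natAbs_coeff_le fun i => by
    rw [coeff_divByMonic_X_pow]
    exact natAbs_coeff_le_polyNorm Q _

noncomputable def reduceStep (P Q : ℤ[X]) : ℤ[X] :=
  Q %ₘ X ^ P.natDegree - Q /ₘ X ^ P.natDegree * P.eraseLead

namespace reduceStep

variable {P : ℤ[X]}

theorem modByMonic_eq (hP : P.Monic) (Q : ℤ[X]) : reduceStep P Q %ₘ P = Q %ₘ P := by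
  refine modByMonic_eq_of_dvd_sub hP ⟨-(Q /ₘ X ^ P.natDegree), ?_⟩
  rw [reduceStep, hP.eraseLead_eq_sub_X_pow]
  linear_combination modByMonic_add_div Q (X ^ P.natDegree)

theorem natDegree_le (Q : ℤ[X]) :
    (reduceStep P Q).natDegree ≤
      max (P.natDegree - 1) (Q.natDegree - P.natDegree + P.eraseLead.natDegree) := by
  refine (natDegree_sub_le _ _).trans (max_le_max ?_ ?_)
  · refine natDegree_le_iff_coeff_eq_zero.mpr fun i hi => ?_
    rw [coeff_modByMonic_X_pow, if_neg (by omega)]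
  · refine natDegree_mul_le.trans (le_of_eq ?_)
    rw [natDegree_divByMonic Q (monic_X_pow _), natDegree_X_pow]

theorem polyNorm_le (hP : P.Monic) (Q : ℤ[X]) :
    polyNorm (reduceStep P Q) ≤ polyNorm Q * (P.support.card * polyNorm P) := by
  have hcard := card_support_eraseLead_add_one hP.ne_zero
  calc polyNorm (reduceStep P Q)
      ≤ polyNorm Q + P.eraseLead.support.card * polyNorm P.eraseLead * polyNorm Q := by
        refine (polyNorm_sub_le _ _).trans (add_le_add (polyNorm_modByMonic_X_pow_le Q _) ?_)
        rw [mul_comm]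
        exact (polyNorm_mul_le _ _).trans
          (Nat.mul_le_mul_left _ (polyNorm_divByMonic_X_pow_le Q _))
    _ ≤ polyNorm Q * polyNorm P + P.eraseLead.support.card * polyNorm P * polyNorm Q := by
        gcongr
        · exact Nat.le_mul_of_pos_right _ hP.one_le_polyNorm
        · exact polyNorm_eraseLead_le P
    _ = polyNorm Q * (P.support.card * polyNorm P) := by rw [← hcard]; ring

end reduceStep

theorem polyNorm_modByMonic_le {P : ℤ[X]} (hP : P.Monic)
    (he : P.eraseLead.natDegree < P.natDegree) (j : ℕ) {Q : ℤ[X]}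
    (hQ : Q.natDegree < P.natDegree + j * (P.natDegree - P.eraseLead.natDegree)) :
    polyNorm (Q %ₘ P) ≤ polyNorm Q * (P.support.card * polyNorm P) ^ j := by
  induction j generalizing Q with
  | zero =>
    rw [(modByMonic_eq_self_iff hP).mpr (degree_lt_degree (by simpa using hQ)), pow_zero, mul_one]
  | succ j ih =>
    have hdeg := reduceStep.natDegree_le (P := P) Q
    rw [add_mul, one_mul] at hQ
    calc polyNorm (Q %ₘ P) = polyNorm (reduceStep P Q %ₘ P) := by
          rw [reduceStep.modByMonic_eq hP]
      _ ≤ polyNorm (reduceStep P Q) * (P.support.card * polyNorm P) ^ j := ih (by omega)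
      _ ≤ polyNorm Q * (P.support.card * polyNorm P) * (P.support.card * polyNorm P) ^ j := by
          gcongr; exact reduceStep.polyNorm_le hP Q
      _ = polyNorm Q * (P.support.card * polyNorm P) ^ (j + 1) := by ring

theorem le_ceil_one_div_mul_sub {γ : ℝ} (hγ : 0 < γ) {n e : ℕ} (he : (e : ℝ) ≤ (1 - γ) * n) :
    n ≤ ⌈1 / γ⌉₊ * (n - e) := by
  have hen : e ≤ n := by
    have : (e : ℝ) ≤ n := by nlinarith [(n.cast_nonneg : (0 : ℝ) ≤ n)]
    exact_mod_cast this
  have hceil : 1 ≤ (⌈1 / γ⌉₊ : ℝ) * γ := by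
    rw [← div_le_iff₀ hγ]; exact Nat.le_ceil _
  have : (n : ℝ) ≤ ⌈1 / γ⌉₊ * ((n : ℝ) - e) := by
    nlinarith [(n.cast_nonneg : (0 : ℝ) ≤ n), (Nat.cast_nonneg ⌈1 / γ⌉₊ : (0 : ℝ) ≤ _)]
  rw [← Nat.cast_le (α := ℝ), Nat.cast_mul, Nat.cast_sub hen]
  exact this

theorem norm_delta_le_general (n : ℕ) (γ : ℝ) (P F G H : Polynomial ℤ)
    (hP : P.Monic) (hPdeg : P.natDegree = n)
    (hγ0 : 0 < γ)
    (hgap : ((P - X ^ n).natDegree : ℝ) ≤ (1 - γ) * n)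
    (hF : F.degree < n) (hG : G.degree < n) :
    polyNorm (H - (F * G) %ₘ P) ≤
      polyNorm H + min F.support.card G.support.card * polyNorm F * polyNorm G *
        (P.support.card * polyNorm P) ^ ⌈1 / γ⌉₊ := by
  subst hPdeg
  rcases eq_or_ne (F * G) 0 with hFG | hFG
  · simp [hFG]
  obtain ⟨hF0, hG0⟩ := mul_ne_zero_iff.mp hFG
  have hdF := (natDegree_lt_iff_degree_lt hF0).mpr hF
  have hdG := (natDegree_lt_iff_degree_lt hG0).mpr hG
  have hk : P.natDegree ≤ ⌈1 / γ⌉₊ * (P.natDegree - P.eraseLead.natDegree) :=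
    le_ceil_one_div_mul_sub hγ0 (hP.eraseLead_eq_sub_X_pow ▸ hgap)
  have hdFG : (F * G).natDegree <
      P.natDegree + ⌈1 / γ⌉₊ * (P.natDegree - P.eraseLead.natDegree) := by
    rw [natDegree_mul hF0 hG0]; omega
  have he : P.eraseLead.natDegree < P.natDegree :=
    Nat.sub_pos_iff_lt.mp (Nat.pos_of_mul_pos_left (a := ⌈1 / γ⌉₊) (by omega))
  calc polyNorm (H - (F * G) %ₘ P) ≤ polyNorm H + polyNorm ((F * G) %ₘ P) := polyNorm_sub_le _ _
    _ ≤ _ := by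
      gcongr
      exact (polyNorm_modByMonic_le hP he _ hdFG).trans
        (Nat.mul_le_mul_right _ (polyNorm_mul_le_min F G))

theorem norm_delta_le (n : ℕ) (γ : ℝ) (P F G H : Polynomial ℤ)
    (hP : P.Monic) (hPdeg : P.natDegree = n) (hPsp : 2 ≤ P.support.card)
    (hγ0 : 0 < γ) (hγ1 : γ ≤ 1)
    (hgap : ((P - X ^ n).natDegree : ℝ) ≤ (1 - γ) * n)
    (hF : F.degree < n) (hG : G.degree < n) (hH : H.degree < n) :
    polyNorm (H - (F * G) %ₘ P) ≤
      polyNorm H + min F.support.card G.support.card * polyNorm F * polyNorm G *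
        (P.support.card * polyNorm P) ^ ⌈1 / γ⌉₊ :=
  norm_delta_le_general n γ P F G H hP hPdeg hγ0 hgap hF hG
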